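/- arXiv:2004.12918 — 3 statements merged into one kernel-verified Lean document; each statement's English description precedes it below -/
import Mathlib

section
/- If S ⊆ ℝ^d is a nonempty compact set, then F_min(S) is compact. -/
/-!
The componentwise minimum of a finite set `P ⊆ ℝ^d` is already the minimum of `d + 1` points
of `P`: one attaining the minimum in each coordinate, plus one more so that the family is
nonempty even for `d = 0`. Hence `Fmin S`, which is the inf-closure of `S` in the lattice
`ℝ^d`, is the image of the compact set `S^(d+1)` under the continuous map taking the
componentwise minimum.
-/

/-- `Fmin S` is the set of componentwise minima of finite nonempty subsets of `S`. -/
def Fmin (d : ℕ) (S : Set (Fin d → ℝ)) : Set (Fin d → ℝ) :=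
  { x | ∃ P : Finset (Fin d → ℝ), ∃ hP : P.Nonempty,
      ↑P ⊆ S ∧ x = fun i => P.inf' hP (fun p => p i) }

open Finset

instance Pi.continuousInf {ι : Type*} {β : ι → Type*} [∀ i, TopologicalSpace (β i)]
    [∀ i, Min (β i)] [∀ i, ContinuousInf (β i)] : ContinuousInf (∀ i, β i) :=
  ⟨continuous_pi fun i =>
    ((continuous_apply i).comp continuous_fst).inf ((continuous_apply i).comp continuous_snd)⟩

theorem Finset.exists_inf'_univ_option_eq_inf' {ι β : Type*} [Fintype ι] [LinearOrder β]
    (P : Finset (ι → β)) (hP : P.Nonempty) :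
    ∃ g : Option ι → ι → β, (∀ j, g j ∈ P) ∧ univ.inf' univ_nonempty g = P.inf' hP id := by
  choose g hgP hg using fun i => P.exists_mem_eq_inf' hP fun p => p i
  obtain ⟨p₀, hp₀⟩ := id hP
  have hmem : ∀ j : Option ι, j.elim p₀ g ∈ P := fun j => by
    cases j with
    | none => exact hp₀
    | some i => exact hgP i
  refine ⟨fun j => j.elim p₀ g, hmem,
    le_antisymm (fun i => ?_) (le_inf' _ _ fun j _ => inf'_le _ (hmem j))⟩
  rw [Finset.inf'_apply, Finset.inf'_apply]
  exact (inf'_le _ (mem_univ (some i))).trans_eq (hg i).symm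

theorem infClosure_eq_image_pi_option {ι β : Type*} [Fintype ι] [LinearOrder β]
    (S : Set (ι → β)) :
    infClosure S =
      (fun g : Option ι → ι → β => univ.inf' univ_nonempty g) '' Set.univ.pi fun _ => S := by
  ext x
  constructor
  · rintro ⟨P, hP, hPS, rfl⟩
    obtain ⟨g, hgP, hg⟩ := P.exists_inf'_univ_option_eq_inf' hP
    exact ⟨g, fun j _ => hPS (hgP j), hg⟩
  · rintro ⟨g, hgS, rfl⟩
    exact finsetInf'_mem_infClosure _ fun j _ => hgS j (Set.mem_univ j)

theorem IsCompact.infClosure_pi {ι β : Type*} [Fintype ι] [LinearOrder β] [TopologicalSpace β]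
    [ContinuousInf β] {S : Set (ι → β)} (hS : IsCompact S) : IsCompact (infClosure S) := by
  rw [infClosure_eq_image_pi_option]
  exact (isCompact_univ_pi fun _ => hS).image <|
    Continuous.finset_inf'_apply univ_nonempty fun j _ => continuous_apply j

theorem Fmin_eq_infClosure (d : ℕ) (S : Set (Fin d → ℝ)) : Fmin d S = infClosure S := by
  ext x
  refine exists_congr fun P => exists_congr fun hP => and_congr_right fun _ => ?_
  have hinf : (fun i => P.inf' hP fun p => p i) = P.inf' hP id :=
    funext fun i => (Finset.inf'_apply hP id i).symm
  rw [hinf, eq_comm]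

theorem Fmin_isCompact_general (d : ℕ) (S : Set (Fin d → ℝ))
    (hS : IsCompact S) :
    IsCompact (Fmin d S) :=
  Fmin_eq_infClosure d S ▸ hS.infClosure_pi

theorem Fmin_isCompact (d : ℕ) (S : Set (Fin d → ℝ))
    (hS : IsCompact S) (hne : S.Nonempty) :
    IsCompact (Fmin d S) :=
  Fmin_isCompact_general d S hS
end

section
/- Let T ⊆ ℝ² be the convex hull of a finite set X of points (a polytope). If T intersects the set P = {(x,y) : x > c ∧ y ≥ d}, then there exist two points p, q ∈ X and coefficients α, β ≥ 0 with α + β = 1 such that α·p + β·q ∈ P. -/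
/-!
Suppose no segment between two points of `X` meets `P`. A segment from a point `b` below the
line `y = d` to a point `a` on or above it crosses that line at a point with `x ≤ c`, which says
that the slope `(b.1 - c) / (d - b.2)` is at most `(c - a.1) / (a.2 - d)`. Hence some `l ≥ 0`
lies between all these slopes, and then the closed half-plane `x + l y ≤ c + l d` contains `X`,
hence its convex hull, while it is disjoint from `P`. Below, `x` and `y` become linear functionals
`f` and `g`.
-/

open Set

section

variable {E : Type*} [AddCommGroup E] [Module ℝ E] (f g : E →ₗ[ℝ] ℝ) {c d : ℝ}

theorem mul_sub_add_mul_sub_nonpos_of_segment {a b : E}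
    (hab : ∀ w ∈ segment ℝ a b, d ≤ g w → f w ≤ c) (ha : d ≤ g a) (hb : g b < d) :
    (d - g b) * (f a - c) + (g a - d) * (f b - c) ≤ 0 := by
  have ht : 0 < g a - g b := by linarith
  set α := (d - g b) / (g a - g b)
  set β := (g a - d) / (g a - g b)
  have hαβ : α + β = 1 := by
    simp only [α, β]
    field_simp
    ring
  have hw : α • a + β • b ∈ segment ℝ a b :=
    ⟨α, β, div_nonneg (by linarith) ht.le, div_nonneg (by linarith) ht.le, hαβ, rfl⟩
  have hgw : g (α • a + β • b) = d := by
    simp only [map_add, map_smul, smul_eq_mul, α, β]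
    field_simp
    ring
  have hfw := hab _ hw hgw.ge
  simp only [map_add, map_smul, smul_eq_mul, α, β] at hfw
  rw [div_mul_eq_mul_div, div_mul_eq_mul_div, ← add_div, div_le_iff₀ ht] at hfw
  linarith

theorem exists_nonneg_forall_add_mul_le {X : Set E} (hX : X.Finite)
    (hseg : ∀ p ∈ X, ∀ q ∈ X, ∀ w ∈ segment ℝ p q, d ≤ g w → f w ≤ c) :
    ∃ l : ℝ, 0 ≤ l ∧ ∀ p ∈ X, f p + l * g p ≤ c + l * d := by
  have hpoint : ∀ p ∈ X, d ≤ g p → f p ≤ c := fun p hp =>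
    hseg p hp p hp p (left_mem_segment ℝ p p)
  set slopes := (fun b => (f b - c) / (d - g b)) '' {b ∈ X | g b < d}
  have hbdd : BddAbove (insert 0 slopes) :=
    ((hX.subset (sep_subset _ _)).image _).insert 0 |>.bddAbove
  refine ⟨sSup (insert 0 slopes), le_csSup hbdd (mem_insert 0 _), fun p hp => ?_⟩
  rcases lt_or_ge (g p) d with hpd | hdp
  · have hslope : (f p - c) / (d - g p) ≤ sSup (insert 0 slopes) :=
      le_csSup hbdd (mem_insert_of_mem 0 ⟨p, ⟨hp, hpd⟩, rfl⟩)
    rw [div_le_iff₀ (sub_pos.2 hpd)] at hslope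
    linarith
  rcases hdp.eq_or_lt with heq | hdp'
  · rw [← heq]
    linarith [hpoint p hp hdp]
  have hle : sSup (insert 0 slopes) ≤ (c - f p) / (g p - d) := by
    refine csSup_le (insert_nonempty 0 _) (forall_mem_insert.2 ⟨?_, ?_⟩)
    · exact div_nonneg (by linarith [hpoint p hp hdp]) (by linarith)
    · rintro _ ⟨b, ⟨hb, hbd⟩, rfl⟩
      rw [div_le_div_iff₀ (by linarith) (by linarith)]
      linarith [mul_sub_add_mul_sub_nonpos_of_segment f g (hseg p hp b hb) hdp hbd]
  rw [le_div_iff₀ (by linarith)] at hle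
  linarith

theorem exists_mem_segment_of_mem_convexHull {X : Set E} (hX : X.Finite) {z : E}
    (hz : z ∈ convexHull ℝ X) (hfz : c < f z) (hgz : d ≤ g z) :
    ∃ p ∈ X, ∃ q ∈ X, ∃ w ∈ segment ℝ p q, c < f w ∧ d ≤ g w := by
  by_contra! hseg
  obtain ⟨l, hl, hlX⟩ := exists_nonneg_forall_add_mul_le f g hX fun p hp q hq w hw hdw =>
    not_lt.1 fun hcw => (hseg p hp q hq w hw hcw).not_ge hdw
  have hhalf : convexHull ℝ X ⊆ {w | (f + l • g) w ≤ c + l * d} :=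
    convexHull_min (fun p hp => by simpa using hlX p hp)
      (convex_halfSpace_le (f + l • g).isLinear _)
  have hzl : f z + l * g z ≤ c + l * d := by simpa using hhalf hz
  nlinarith

end

theorem polytope_inter_halfspaces_two_points
    (c d : ℝ) (X : Finset (ℝ × ℝ))
    (h : ∃ z ∈ convexHull ℝ (X : Set (ℝ × ℝ)), c < z.1 ∧ d ≤ z.2) :
    ∃ p ∈ X, ∃ q ∈ X, ∃ α β : ℝ, 0 ≤ α ∧ 0 ≤ β ∧ α + β = 1 ∧
      c < (α • p + β • q).1 ∧ d ≤ (α • p + β • q).2 := by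
  obtain ⟨z, hz, hcz, hdz⟩ := h
  obtain ⟨p, hp, q, hq, _, ⟨α, β, hα, hβ, hαβ, rfl⟩, hcw, hdw⟩ :=
    exists_mem_segment_of_mem_convexHull (LinearMap.fst ℝ ℝ ℝ) (LinearMap.snd ℝ ℝ ℝ)
      X.finite_toSet hz hcz hdz
  exact ⟨p, hp, q, hq, α, β, hα, hβ, hαβ, hcw, hdw⟩
end

section
/- In the three-vertex mean-payoff game with vertices {1,2,3}, where Player 1 controls vertex 1 (self-loop a with payoff (0,0), move b to vertex 2 with payoff (0,0)) and Player 0 controls vertices 2,3 (edges labeled c with Player-1 payoff 2 and d with Player-1 payoff 1), the strategy σ₀ of Player 0 that, if Player 1 played a exactly k times before b, forever repeats c^k followed by one d, yields: the strategy σ₁^ω (always a) gives Player 1 mean-payoff 0, while σ₁^k (k times a then b) gives Player 1 mean-payoff (2k+1)/(k+1); hence Player 1 payoffs are strictly increasing in k and no best response to σ₀ exists. -/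
/-- Player 1's weight sequence (on his own dimension) produced when he plays
`a` exactly `k` times and then `b` (each with payoff `0`), against the Player 0
strategy that then forever repeats `k` times `c` (payoff `2`) followed by one
`d` (payoff `1`). -/
def seqAgainst (k : ℕ) : ℕ → ℝ := fun n =>
  if n ≤ k then 0 else if (n - (k + 1)) % (k + 1) < k then 2 else 1

/-- The mean-payoff of a weight sequence. -/
noncomputable def MP (a : ℕ → ℝ) : ℝ :=
  Filter.liminf (fun n : ℕ => (∑ i ∈ Finset.range n, a i) / n) Filter.atTop


/-! After `k + 1` zero entries, entry `k + 1 + j` of `seqAgainst k` is `2` minus the indicator of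
`k + 1 ∣ j + 1`, so the first `k + 1 + m` entries sum to `2 m - ⌊m / (k + 1)⌋` and the averages
tend to `2 - 1 / (k + 1)`. These values increase strictly in `k` and all exceed `0`, so the set
of payoffs has no greatest element. -/

open Filter Finset Topology

lemma Nat.mod_lt_iff_not_dvd_add_one (k j : ℕ) : j % (k + 1) < k ↔ ¬ k + 1 ∣ j + 1 := by
  rcases k with _ | k
  · simp
  · rw [Nat.dvd_iff_mod_eq_zero, Nat.add_mod_eq_ite, Nat.one_mod_eq_one.mpr (by omega)]
    have := Nat.mod_lt j (show 0 < k + 1 + 1 by omega)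
    split_ifs <;> grind

lemma tendsto_natCast_div_div_atTop (p : ℕ) :
    Tendsto (fun m : ℕ => ((m / p : ℕ) : ℝ) / m) atTop (𝓝 (p : ℝ)⁻¹) :=
  ((tendsto_nat_floor_mul_div_atTop (inv_nonneg.2 p.cast_nonneg)).comp
    tendsto_natCast_atTop_atTop).congr fun m => by
      simp [inv_mul_eq_div, Nat.floor_div_eq_div]

lemma Filter.Tendsto.div_natCast_add {f : ℕ → ℝ} {L : ℝ}
    (h : Tendsto (fun m : ℕ => f m / m) atTop (𝓝 L)) (c : ℝ) :
    Tendsto (fun m : ℕ => f m / (m + c)) atTop (𝓝 L) := by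
  simpa using (h.mul (tendsto_natCast_div_add_atTop c)).congr' <|
    (eventually_ne_atTop 0).mono fun m hm => by field_simp

lemma StrictMono.not_isGreatest_insert_range {α : Type*} [Preorder α] {f : ℕ → α}
    (hf : StrictMono f) {c : α} (hc : c < f 0) (v : α) :
    ¬ IsGreatest (insert c (Set.range f)) v := by
  rintro ⟨hv | ⟨k, rfl⟩, hmax⟩
  · exact (hv ▸ hc).not_ge (hmax (Set.mem_insert_of_mem _ ⟨0, rfl⟩))
  · exact (hf k.lt_succ_self).not_ge (hmax (Set.mem_insert_of_mem _ ⟨k + 1, rfl⟩))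

lemma seqAgainst_of_le {k n : ℕ} (h : n ≤ k) : seqAgainst k n = 0 := if_pos h

lemma seqAgainst_add (k j : ℕ) :
    seqAgainst k (k + 1 + j) = 2 - if k + 1 ∣ j + 1 then 1 else 0 := by
  simp only [seqAgainst, if_neg (show ¬ k + 1 + j ≤ k by omega), Nat.add_sub_cancel_left,
    Nat.mod_lt_iff_not_dvd_add_one]
  split_ifs <;> norm_num

lemma sum_range_seqAgainst (k m : ℕ) :
    ∑ i ∈ range (k + 1 + m), seqAgainst k i = 2 * m - ((m / (k + 1) : ℕ) : ℝ) := by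
  rw [sum_range_add, sum_eq_zero fun i hi => seqAgainst_of_le (Nat.lt_succ_iff.mp
    (mem_range.mp hi)), zero_add]
  simp only [seqAgainst_add, sum_sub_distrib, sum_const, card_range, sum_boole,
    Nat.card_multiples, nsmul_eq_mul]
  ring

lemma tendsto_mean_seqAgainst (k : ℕ) :
    Tendsto (fun n : ℕ => (∑ i ∈ range n, seqAgainst k i) / n) atTop
      (𝓝 ((2 * (k : ℝ) + 1) / ((k : ℝ) + 1))) := by
  rw [← tendsto_add_atTop_iff_nat (k + 1)]
  have hmean : Tendsto (fun m : ℕ => (2 * m - ((m / (k + 1) : ℕ) : ℝ)) / m) atTop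
      (𝓝 (2 - ((k + 1 : ℕ) : ℝ)⁻¹)) :=
    (tendsto_const_nhds.sub (tendsto_natCast_div_div_atTop (k + 1))).congr' <|
      (eventually_ne_atTop 0).mono fun m hm => by field_simp
  convert hmean.div_natCast_add (k + 1 : ℝ) using 2 with m
  · rw [add_comm m, sum_range_seqAgainst]
    push_cast
    ring
  · push_cast
    field_simp
    ring

theorem no_best_response_example :
    (∀ k : ℕ, MP (seqAgainst k) = (2 * (k : ℝ) + 1) / ((k : ℝ) + 1)) ∧
    MP (fun _ => (0 : ℝ)) = 0 ∧
    (∀ k₁ k₂ : ℕ, k₁ < k₂ →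
      (2 * (k₁ : ℝ) + 1) / ((k₁ : ℝ) + 1) < (2 * (k₂ : ℝ) + 1) / ((k₂ : ℝ) + 1)) ∧
    ¬ ∃ v ∈ (insert 0 (Set.range fun k : ℕ => (2 * (k : ℝ) + 1) / ((k : ℝ) + 1)) : Set ℝ),
        ∀ u ∈ (insert 0 (Set.range fun k : ℕ => (2 * (k : ℝ) + 1) / ((k : ℝ) + 1)) : Set ℝ),
          u ≤ v := by
  have hmono : StrictMono fun k : ℕ => (2 * (k : ℝ) + 1) / ((k : ℝ) + 1) := by
    intro k₁ k₂ h
    have : (k₁ : ℝ) < k₂ := by exact_mod_cast h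
    rw [div_lt_div_iff₀ (by positivity) (by positivity)]
    linarith
  refine ⟨fun k => (tendsto_mean_seqAgainst k).liminf_eq, by simp [MP], fun _ _ => (hmono ·), ?_⟩
  exact fun ⟨v, hv⟩ => hmono.not_isGreatest_insert_range (by norm_num) v hv
end
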